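/- Suppose v_n converges uniformly to v on S. Then for every ε > 0 there exists n₀ such that for all n ≥ n₀, every state s, every feasible play (s_m) ε-optimal for the n-stage problem at s, and every t ∈ [ε, 1], the upper bound (1/n) Σ_{m=1}^{⌊tn⌋} f(s_m) ≤ t·v(s) + 3ε holds. -/

import Mathlib

open Filter Finset

/-- A dynamic programming problem: a set of states `S`, a correspondence `Phi`
with nonempty values, and a payoff function `f` with values in `[0,1]`. -/
structure DPP (S : Type*) where
  Phi : S → Set S
  phi_nonempty : ∀ s, (Phi s).Nonempty
  f : S → ℝ
  f_mem : ∀ s, f s ∈ Set.Icc (0 : ℝ) 1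

variable {S : Type*}

/-- A feasible play at `s`: a sequence `(s_m)_{m ≥ 1}` with `s₁ = s` and
`s_{m+1} ∈ Φ(s_m)`. -/
def DPP.Feasible (P : DPP S) (s : S) (play : ℕ → S) : Prop :=
  play 1 = s ∧ ∀ m, 1 ≤ m → play (m + 1) ∈ P.Phi (play m)

/-- The `n`-stage average payoff of a play: `(1/n) Σ_{m=1}^n f(s_m)`. -/
noncomputable def DPP.avg (P : DPP S) (n : ℕ) (play : ℕ → S) : ℝ :=
  (1 / (n : ℝ)) * ∑ m ∈ Finset.Icc 1 n, P.f (play m)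

/-- The `n`-stage value: supremum of the `n`-stage average payoff over feasible plays. -/
noncomputable def DPP.val (P : DPP S) (n : ℕ) (s : S) : ℝ :=
  sSup {x | ∃ play, P.Feasible s play ∧ x = P.avg n play}

/-! The prefix of length `k = ⌊tn⌋` of a feasible play at `s` is itself a feasible `k`-stage play
at `s`, so its average is at most `v_k(s)`, which uniform convergence puts below `v(s) + ε` once
`k` is large; since `k ≥ εn`, taking `n` large makes `k` large uniformly in `t ∈ [ε, 1]`. -/

namespace DPP

variable (P : DPP S)

lemma avg_nonneg (n : ℕ) (play : ℕ → S) : 0 ≤ P.avg n play :=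
  mul_nonneg (by positivity) (sum_nonneg fun m _ => (P.f_mem (play m)).1)

lemma avg_le_one (n : ℕ) (play : ℕ → S) : P.avg n play ≤ 1 := by
  rcases Nat.eq_zero_or_pos n with rfl | hn
  · simp [avg]
  have hsum : ∑ m ∈ Icc 1 n, P.f (play m) ≤ n := by
    simpa using sum_le_sum fun m (_ : m ∈ Icc 1 n) => (P.f_mem (play m)).2
  rw [avg, one_div_mul_eq_div, div_le_one (by exact_mod_cast hn)]
  exact hsum

lemma avg_le_val {s : S} {play : ℕ → S} (h : P.Feasible s play) (n : ℕ) :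
    P.avg n play ≤ P.val n s :=
  le_csSup ⟨1, by rintro x ⟨q, _, rfl⟩; exact P.avg_le_one n q⟩ ⟨play, h, rfl⟩

lemma one_div_mul_sum_eq (play : ℕ → S) (k : ℕ) {n : ℕ} (hn : 0 < n) :
    1 / (n : ℝ) * ∑ m ∈ Icc 1 k, P.f (play m) = (k / n : ℝ) * P.avg k play := by
  rcases Nat.eq_zero_or_pos k with rfl | hk
  · simp
  have hk' : (k : ℝ) ≠ 0 := by positivity
  have hn' : (n : ℝ) ≠ 0 := by positivity
  simp only [avg]
  field_simp

lemma one_div_mul_prefix_sum_le {s : S} {play : ℕ → S} (h : P.Feasible s play)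
    {k n : ℕ} (hn : 0 < n) {t c : ℝ} (hk : (k : ℝ) ≤ t * n) (hval : P.val k s ≤ c) :
    1 / (n : ℝ) * ∑ m ∈ Icc 1 k, P.f (play m) ≤ t * c := by
  have hkn : (k / n : ℝ) ≤ t := by
    rwa [div_le_iff₀ (by exact_mod_cast hn)]
  have ht : 0 ≤ t := (div_nonneg k.cast_nonneg n.cast_nonneg).trans hkn
  rw [P.one_div_mul_sum_eq play k hn]
  calc (k / n : ℝ) * P.avg k play ≤ t * P.avg k play :=
        mul_le_mul_of_nonneg_right hkn (P.avg_nonneg k play)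
    _ ≤ t * c := mul_le_mul_of_nonneg_left ((P.avg_le_val h k).trans hval) ht

end DPP

lemma TendstoUniformly.eventually_forall_lt_add {α ι : Type*} {l : Filter ι}
    {F : ι → α → ℝ} {g : α → ℝ} (hF : TendstoUniformly F g l) {ε : ℝ} (hε : 0 < ε) :
    ∀ᶠ i in l, ∀ x, F i x < g x + ε :=
  (Metric.tendstoUniformly_iff.mp hF ε hε).mono fun _ hi x => by
    linarith [(abs_sub_lt_iff.mp (Real.dist_eq _ _ ▸ hi x)).2]

lemma Nat.le_floor_mul_of_ceil_div_le {N n : ℕ} {ε t : ℝ} (hε : 0 < ε) (ht : ε ≤ t)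
    (hn : ⌈(N : ℝ) / ε⌉₊ ≤ n) : N ≤ ⌊t * n⌋₊ := by
  have hNn : (N : ℝ) ≤ ε * n :=
    (div_le_iff₀' hε).mp ((Nat.le_ceil _).trans (by exact_mod_cast hn))
  exact Nat.le_floor (hNn.trans (mul_le_mul_of_nonneg_right ht n.cast_nonneg))

/-- Upper bound: if `v_n → v` uniformly, then for every `ε > 0` there is `n₀` such that for
all `n ≥ n₀`, every state `s`, every `ε`-optimal feasible play and every `t ∈ [ε,1]`:
`(1/n) Σ_{m=1}^{⌊tn⌋} f(s_m) ≤ t·v(s) + 3ε`. -/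
theorem property_P_upper (P : DPP S) (v : S → ℝ)
    (hconv : TendstoUniformly (fun n s => P.val n s) v atTop) :
    ∀ ε > (0 : ℝ), ∃ n₀ : ℕ, ∀ n ≥ n₀, ∀ s : S, ∀ play : ℕ → S,
      P.Feasible s play → P.avg n play ≥ P.val n s - ε →
      ∀ t ∈ Set.Icc ε 1,
        (1 / (n : ℝ)) * ∑ m ∈ Finset.Icc 1 ⌊t * (n : ℝ)⌋₊, P.f (play m) ≤ t * v s + 3 * ε := by
  intro ε hε
  obtain ⟨N, hN⟩ := eventually_atTop.mp (hconv.eventually_forall_lt_add hε)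
  refine ⟨⌈((N + 1 : ℕ) : ℝ) / ε⌉₊, fun n hn s play hfeas _ t ⟨htε, ht1⟩ => ?_⟩
  have hk : N + 1 ≤ ⌊t * n⌋₊ := Nat.le_floor_mul_of_ceil_div_le hε htε hn
  have hn0 : 0 < n := Nat.pos_of_ne_zero fun h => by simp [h] at hk
  have ht0 : 0 ≤ t := hε.le.trans htε
  calc 1 / (n : ℝ) * ∑ m ∈ Icc 1 ⌊t * n⌋₊, P.f (play m) ≤ t * (v s + ε) :=
        P.one_div_mul_prefix_sum_le hfeas hn0 (Nat.floor_le (mul_nonneg ht0 n.cast_nonneg))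
          (hN _ (by omega) s).le
    _ ≤ t * v s + 3 * ε := by nlinarith
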